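/- Let L be a d×d Hermitian matrix with unit trace, let ρ̄ be a d×d density matrix, and let ρ̂ be any density matrix minimizing the Frobenius distance to L over all d×d density matrices. If ‖L − ρ̄‖ ≤ τ in spectral norm, then ‖ρ̂ − ρ̄‖ ≤ 2τ in spectral norm. -/

import Mathlib

open MeasureTheory Matrix
open scoped Kronecker ComplexOrder

/-- The spectral norm (operator norm on Euclidean space) of a complex matrix. -/
noncomputable def specNorm {m : Type*} [Fintype m] [DecidableEq m]
    (A : Matrix m m ℂ) : ℝ :=
  ‖Matrix.toEuclideanCLM (𝕜 := ℂ) A‖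

/-- The Frobenius norm `√tr(A†A)` of a complex matrix. -/
noncomputable def frobNorm {m : Type*} [Fintype m]
    (A : Matrix m m ℂ) : ℝ :=
  Real.sqrt ((Aᴴ * A).trace.re)

/-- The trace norm `tr √(A†A)` of a complex matrix. -/
noncomputable def traceNorm {m : Type*} [Fintype m] [DecidableEq m]
    (A : Matrix m m ℂ) : ℝ :=
  (((Matrix.posSemidef_conjTranspose_mul_self A).1.eigenvectorUnitary : Matrix m m ℂ) *
    Matrix.diagonal (((↑) : ℝ → ℂ) ∘ (√·) ∘ (Matrix.posSemidef_conjTranspose_mul_self A).1.eigenvalues) *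
    (star (Matrix.posSemidef_conjTranspose_mul_self A).1.eigenvectorUnitary : Matrix m m ℂ)).trace.re

/-- The residual spectral mass `Σ_r(A)`: for a Hermitian matrix with eigenvalues
`λ₁ ≥ … ≥ λ_d`, this is `Σ_{j=r+1}^d λ_j`, i.e. the trace minus the largest possible
sum of `r` eigenvalues (junk value `0` for non-Hermitian matrices). -/
noncomputable def residualMass {m : Type*} [Fintype m] [DecidableEq m]
    (r : ℕ) (A : Matrix m m ℂ) : ℝ :=
  if h : A.IsHermitian then
    A.trace.re - sSup {x : ℝ | ∃ s : Finset m, s.card = r ∧ x = ∑ i ∈ s, h.eigenvalues i}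
  else 0

/-- A density matrix: positive semidefinite with unit trace. -/
def IsDensity {m : Type*} [Fintype m] (A : Matrix m m ℂ) : Prop :=
  A.PosSemidef ∧ A.trace = 1

/-- A rank-one orthogonal projector. -/
def IsRankOneProj {m : Type*} [Fintype m] [DecidableEq m] (P : Matrix m m ℂ) : Prop :=
  Pᴴ = P ∧ P * P = P ∧ P.rank = 1

/-- A complex projective 2-design in dimension `d`: rank-one orthogonal projectors with
`Σ_k tr(P_k X) P_k = (M/(d(d+1))) (X + tr(X) 𝟙)` for all `X`. -/
def IsTwoDesign {d M : ℕ} (P : Fin M → Matrix (Fin d) (Fin d) ℂ) : Prop :=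
  (∀ k, IsRankOneProj (P k)) ∧
  ∀ X : Matrix (Fin d) (Fin d) ℂ,
    ∑ k, (P k * X).trace • P k
      = ((M : ℂ) / ((d : ℂ) * ((d : ℂ) + 1))) • (X + X.trace • (1 : Matrix (Fin d) (Fin d) ℂ))

/-- A single-qubit complex projective 2-design. -/
def IsQubitTwoDesign {m : ℕ} (P : Fin m → Matrix (Fin 2) (Fin 2) ℂ) : Prop :=
  (∀ k, IsRankOneProj (P k)) ∧
  ∀ X : Matrix (Fin 2) (Fin 2) ℂ,
    ∑ k, (P k * X).trace • P k
      = ((m : ℂ) / 6) • (X + X.trace • (1 : Matrix (Fin 2) (Fin 2) ℂ))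

/-- `n`-fold tensor product of `2×2` matrices, as a matrix indexed by functions
`Fin n → Fin 2`, with entries `(⊗_j A_j)(x,y) = Π_j A_j (x j) (y j)`. -/
noncomputable def nKron {n : ℕ} (A : Fin n → Matrix (Fin 2) (Fin 2) ℂ) :
    Matrix (Fin n → Fin 2) (Fin n → Fin 2) ℂ :=
  Matrix.of fun x y => ∏ j, A j (x j) (y j)

/-- Partial trace over the second tensor factor. -/
noncomputable def ptrace2 {m : Type*} [Fintype m] (A : Matrix (m × m) (m × m) ℂ) : Matrix m m ℂ :=
  Matrix.of fun a a' => ∑ b, A (a, b) (a', b)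


/-!
Diagonalise `L = U diag(λ) U*`. The Frobenius projection of `L` onto the density matrices is the
water-filling matrix `σ = U diag((λᵢ - θ)₊) U*`, with `θ` fixed by `tr σ = 1`: the matrix
`L - σ = U diag(min λᵢ θ) U*` pairs with every density matrix to at most `θ` and with `σ` to exactly
`θ`, which is the variational inequality characterising the projection. Reading `‖L - ρ̄‖ ≤ τ` on
the diagonal of the eigenbasis of `L` gives `λᵢ ≥ -τ` and `∑ (λᵢ - τ)₊ ≤ tr ρ̄ = 1`, so `θ ∈ [0, τ]`
and `‖L - σ‖ = maxᵢ |min λᵢ θ| ≤ τ`. The triangle inequality through `L` finishes.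
-/

section FrobeniusInner

variable {m n : Type*} [Fintype m] [Fintype n]

noncomputable def frobInner (A B : Matrix m n ℂ) : ℝ := (Aᴴ * B).trace.re

lemma frobInner_comm (A B : Matrix m n ℂ) : frobInner A B = frobInner B A := by
  rw [frobInner, frobInner, ← Complex.conj_re, ← Complex.star_def, ← trace_conjTranspose,
    conjTranspose_mul, conjTranspose_conjTranspose]

lemma frobInner_sub_right (A B C : Matrix m n ℂ) :
    frobInner A (B - C) = frobInner A B - frobInner A C := by
  simp only [frobInner, Matrix.mul_sub, trace_sub, Complex.sub_re]

lemma frobInner_add_add_self (A B : Matrix m n ℂ) :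
    frobInner (A + B) (A + B) = frobInner A A + 2 * frobInner A B + frobInner B B := by
  have h := frobInner_comm B A
  simp only [frobInner, conjTranspose_add, Matrix.add_mul, Matrix.mul_add, trace_add,
    Complex.add_re] at h ⊢
  linarith

lemma frobInner_self_nonneg (A : Matrix m n ℂ) : 0 ≤ frobInner A A :=
  Complex.nonneg_iff.mp (posSemidef_conjTranspose_mul_self A).trace_nonneg |>.1

lemma frobInner_self_eq_zero {A : Matrix m n ℂ} : frobInner A A = 0 ↔ A = 0 := by
  refine ⟨fun h => trace_conjTranspose_mul_self_eq_zero_iff.mp ?_, fun h => by simp [h, frobInner]⟩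
  have him := (Complex.nonneg_iff.mp (posSemidef_conjTranspose_mul_self A).trace_nonneg).2
  exact Complex.ext h him.symm

end FrobeniusInner

lemma frobNorm_sq {m : Type*} [Fintype m] (A : Matrix m m ℂ) : frobNorm A ^ 2 = frobInner A A :=
  Real.sq_sqrt (frobInner_self_nonneg A)

/-- Pythagoras: `‖L - ρ‖² ≥ ‖L - σ‖² + ‖σ - ρ‖²`. -/
lemma eq_of_frobNorm_sub_le_of_frobInner_nonpos {m : Type*} [Fintype m] {L σ ρ : Matrix m m ℂ}
    (hvar : frobInner (L - σ) (ρ - σ) ≤ 0) (hmin : frobNorm (L - ρ) ≤ frobNorm (L - σ)) :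
    ρ = σ := by
  have hsq : frobNorm (L - ρ) ^ 2 ≤ frobNorm (L - σ) ^ 2 :=
    pow_le_pow_left₀ (Real.sqrt_nonneg _) hmin 2
  have hexp : frobInner (L - ρ) (L - ρ)
      = frobInner (L - σ) (L - σ) - 2 * frobInner (L - σ) (ρ - σ) + frobInner (σ - ρ) (σ - ρ) := by
    rw [show L - ρ = (L - σ) + (σ - ρ) by abel, frobInner_add_add_self,
      show σ - ρ = -(ρ - σ) by abel]
    simp only [frobInner, Matrix.mul_neg, trace_neg, Complex.neg_re]
    ring
  rw [frobNorm_sq, frobNorm_sq, hexp] at hsq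
  have hzero : frobInner (σ - ρ) (σ - ρ) = 0 :=
    le_antisymm (by linarith) (frobInner_self_nonneg _)
  exact (sub_eq_zero.mp (frobInner_self_eq_zero.mp hzero)).symm

lemma Matrix.PosSemidef.re_diag_nonneg {m : Type*} {S : Matrix m m ℂ} (hS : S.PosSemidef) (i : m) :
    0 ≤ (S i i).re :=
  (Complex.nonneg_iff.mp hS.diag_nonneg).1

lemma IsDensity.sum_re_diag {m : Type*} [Fintype m] {S : Matrix m m ℂ} (hS : IsDensity S) :
    ∑ i, (S i i).re = 1 := by
  simpa [trace, Complex.re_sum] using congrArg Complex.re hS.2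

section SpectralNorm

open scoped Matrix.Norms.L2Operator

variable {m : Type*} [Fintype m] [DecidableEq m]

lemma specNorm_eq_norm (A : Matrix m m ℂ) : specNorm A = ‖A‖ := rfl

lemma specNorm_nonneg (A : Matrix m m ℂ) : 0 ≤ specNorm A := norm_nonneg _

lemma specNorm_sub_comm (A B : Matrix m m ℂ) : specNorm (A - B) = specNorm (B - A) :=
  norm_sub_rev A B

lemma specNorm_sub_le (A B C : Matrix m m ℂ) :
    specNorm (A - C) ≤ specNorm (A - B) + specNorm (B - C) :=
  norm_sub_le_norm_sub_add_norm_sub A B C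

lemma specNorm_conjStarAlgAut (U : unitaryGroup m ℂ) (A : Matrix m m ℂ) :
    specNorm (Unitary.conjStarAlgAut ℂ _ U A) = specNorm A := by
  rw [specNorm_eq_norm, specNorm_eq_norm, Unitary.conjStarAlgAut_apply, mul_assoc,
    CStarRing.norm_coe_unitary_mul, ← Unitary.coe_star, CStarRing.norm_mul_coe_unitary]

lemma norm_apply_le_specNorm (A : Matrix m m ℂ) (i j : m) : ‖A i j‖ ≤ specNorm A := by
  have hcol : toEuclideanCLM (𝕜 := ℂ) A (EuclideanSpace.single j 1) i = A i j := by simp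
  calc ‖A i j‖ ≤ ‖toEuclideanCLM (𝕜 := ℂ) A (EuclideanSpace.single j 1)‖ :=
        hcol ▸ PiLp.norm_apply_le _ i
    _ ≤ specNorm A * ‖EuclideanSpace.single j (1 : ℂ)‖ := ContinuousLinearMap.le_opNorm _ _
    _ = specNorm A := by simp

lemma specNorm_diagonal_le {c : m → ℂ} {τ : ℝ} (hτ : 0 ≤ τ) (hc : ∀ i, ‖c i‖ ≤ τ) :
    specNorm (diagonal c) ≤ τ := by
  rw [specNorm_eq_norm, l2_opNorm_diagonal]
  exact (pi_norm_le_iff_of_nonneg hτ).mpr hc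

end SpectralNorm

section UnitaryConj

variable {m : Type*} [Fintype m] [DecidableEq m]

lemma trace_conjStarAlgAut (U : unitaryGroup m ℂ) (A : Matrix m m ℂ) :
    (Unitary.conjStarAlgAut ℂ _ U A).trace = A.trace := by
  rw [Unitary.conjStarAlgAut_apply, trace_mul_cycle, Unitary.coe_star_mul_self, one_mul]

lemma frobInner_conjStarAlgAut (U : unitaryGroup m ℂ) (A B : Matrix m m ℂ) :
    frobInner (Unitary.conjStarAlgAut ℂ _ U A) (Unitary.conjStarAlgAut ℂ _ U B)
      = frobInner A B := by
  rw [frobInner, ← star_eq_conjTranspose, ← map_star, ← map_mul, trace_conjStarAlgAut,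
    star_eq_conjTranspose, frobInner]

lemma frobInner_conjStarAlgAut_left (U : unitaryGroup m ℂ) (A B : Matrix m m ℂ) :
    frobInner (Unitary.conjStarAlgAut ℂ _ U A) B
      = frobInner A (Unitary.conjStarAlgAut ℂ _ (star U) B) := by
  rw [← Unitary.conjStarAlgAut_symm, ← frobInner_conjStarAlgAut U A,
    StarAlgEquiv.apply_symm_apply]

lemma frobInner_diagonal_ofReal (c : m → ℝ) (B : Matrix m m ℂ) :
    frobInner (diagonal fun i => (c i : ℂ)) B = ∑ i, c i * (B i i).re := by
  simp [frobInner, trace, diagonal_conjTranspose, Complex.re_sum]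

lemma Matrix.PosSemidef.conjStarAlgAut {S : Matrix m m ℂ} (hS : S.PosSemidef)
    (U : unitaryGroup m ℂ) : (Unitary.conjStarAlgAut ℂ _ U S).PosSemidef := by
  rw [Unitary.conjStarAlgAut_apply, star_eq_conjTranspose]
  exact hS.mul_mul_conjTranspose_same _

lemma IsDensity.conjStarAlgAut {S : Matrix m m ℂ} (hS : IsDensity S) (U : unitaryGroup m ℂ) :
    IsDensity (Unitary.conjStarAlgAut ℂ _ U S) :=
  ⟨hS.1.conjStarAlgAut U, (trace_conjStarAlgAut U S).trans hS.2⟩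

lemma isDensity_diagonal_ofReal {z : m → ℝ} (hz : ∀ i, 0 ≤ z i) (hsum : ∑ i, z i = 1) :
    IsDensity (diagonal fun i => (z i : ℂ)) := by
  refine ⟨PosSemidef.diagonal fun i => Complex.zero_le_real.mpr (hz i), ?_⟩
  rw [trace_diagonal, ← Complex.ofReal_sum, hsum, Complex.ofReal_one]

end UnitaryConj

lemma exists_sum_max_sub_eq {ι : Type*} [Fintype ι] (x : ι → ℝ) {a b c : ℝ} (hab : a ≤ b)
    (ha : c ≤ ∑ i, max (x i - a) 0) (hb : ∑ i, max (x i - b) 0 ≤ c) :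
    ∃ θ ∈ Set.Icc a b, ∑ i, max (x i - θ) 0 = c := by
  have hcont : Continuous fun θ => ∑ i, max (x i - θ) 0 := by fun_prop
  exact intermediate_value_Icc' hab hcont.continuousOn ⟨hb, ha⟩

namespace Matrix.IsHermitian

variable {m : Type*} [Fintype m] [DecidableEq m] {L : Matrix m m ℂ} (hL : L.IsHermitian)

/-- Water-filling: once `θ` makes its trace `1`, this is the Frobenius projection of `L` onto the
density matrices. -/
noncomputable def waterFill (θ : ℝ) : Matrix m m ℂ :=
  Unitary.conjStarAlgAut ℂ _ hL.eigenvectorUnitary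
    (diagonal fun i => ((max (hL.eigenvalues i - θ) 0 : ℝ) : ℂ))

lemma sub_waterFill (θ : ℝ) :
    L - hL.waterFill θ = Unitary.conjStarAlgAut ℂ _ hL.eigenvectorUnitary
      (diagonal fun i => ((min (hL.eigenvalues i) θ : ℝ) : ℂ)) := by
  calc L - hL.waterFill θ = _ - hL.waterFill θ := congrArg (· - _) hL.spectral_theorem
    _ = _ := by
      rw [waterFill, ← map_sub, diagonal_sub]
      congr 3 with i
      rw [Function.comp_apply, RCLike.ofReal_eq_complex_ofReal, ← Complex.ofReal_sub,
        ← min_sub_sub_left, sub_zero, sub_sub_cancel, min_comm]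

lemma isDensity_waterFill {θ : ℝ} (hθ : ∑ i, max (hL.eigenvalues i - θ) 0 = 1) :
    IsDensity (hL.waterFill θ) :=
  (isDensity_diagonal_ofReal (fun _ => le_max_right _ _) hθ).conjStarAlgAut _

lemma specNorm_sub_waterFill_le {θ τ : ℝ} (hθ : |θ| ≤ τ) (hx : ∀ i, -τ ≤ hL.eigenvalues i) :
    specNorm (L - hL.waterFill θ) ≤ τ := by
  rw [sub_waterFill, specNorm_conjStarAlgAut]
  refine specNorm_diagonal_le ((abs_nonneg θ).trans hθ) fun i => ?_
  rw [Complex.norm_real, Real.norm_eq_abs, abs_le]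
  exact ⟨le_min (hx i) (neg_le_of_abs_le hθ), (min_le_right _ _).trans (le_of_abs_le hθ)⟩

lemma frobInner_sub_waterFill_eq (θ : ℝ) (S : Matrix m m ℂ) :
    frobInner (L - hL.waterFill θ) S = ∑ i, min (hL.eigenvalues i) θ *
      (Unitary.conjStarAlgAut ℂ _ (star hL.eigenvectorUnitary) S i i).re := by
  rw [sub_waterFill, frobInner_conjStarAlgAut_left, frobInner_diagonal_ofReal]

lemma frobInner_sub_waterFill_le {θ : ℝ} {S : Matrix m m ℂ} (hS : IsDensity S) :
    frobInner (L - hL.waterFill θ) S ≤ θ := by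
  have hT := hS.conjStarAlgAut (star hL.eigenvectorUnitary)
  calc frobInner (L - hL.waterFill θ) S
      ≤ ∑ i, θ * (Unitary.conjStarAlgAut ℂ _ (star hL.eigenvectorUnitary) S i i).re := by
        rw [frobInner_sub_waterFill_eq]
        gcongr with i
        · exact hT.1.re_diag_nonneg i
        · exact min_le_right _ _
    _ = θ := by rw [← Finset.mul_sum, hT.sum_re_diag, mul_one]

lemma frobInner_sub_waterFill_self {θ : ℝ} (hθ : ∑ i, max (hL.eigenvalues i - θ) 0 = 1) :
    frobInner (L - hL.waterFill θ) (hL.waterFill θ) = θ := by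
  rw [frobInner_sub_waterFill_eq, waterFill, ← Unitary.conjStarAlgAut_symm,
    StarAlgEquiv.symm_apply_apply]
  calc _ = ∑ i, θ * max (hL.eigenvalues i - θ) 0 := by
        refine Finset.sum_congr rfl fun i _ => ?_
        rw [diagonal_apply_eq, Complex.ofReal_re]
        rcases le_total θ (hL.eigenvalues i) with h | h
        · rw [min_eq_right h]
        · rw [max_eq_right (sub_nonpos.mpr h), mul_zero, mul_zero]
    _ = θ := by rw [← Finset.mul_sum, hθ, mul_one]

lemma frobInner_sub_waterFill_sub_nonpos {θ : ℝ} (hθ : ∑ i, max (hL.eigenvalues i - θ) 0 = 1)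
    {S : Matrix m m ℂ} (hS : IsDensity S) :
    frobInner (L - hL.waterFill θ) (S - hL.waterFill θ) ≤ 0 := by
  rw [frobInner_sub_right, hL.frobInner_sub_waterFill_self hθ]
  linarith [hL.frobInner_sub_waterFill_le (θ := θ) hS]

lemma abs_eigenvalues_sub_le_specNorm (ρ : Matrix m m ℂ) (i : m) :
    |hL.eigenvalues i - (Unitary.conjStarAlgAut ℂ _ (star hL.eigenvectorUnitary) ρ i i).re|
      ≤ specNorm (L - ρ) := by
  have h := norm_apply_le_specNorm
    (Unitary.conjStarAlgAut ℂ _ (star hL.eigenvectorUnitary) (L - ρ)) i i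
  rw [specNorm_conjStarAlgAut, map_sub, hL.conjStarAlgAut_star_eigenvectorUnitary, sub_apply,
    diagonal_apply_eq] at h
  simpa using (Complex.abs_re_le_norm _).trans h

lemma neg_specNorm_sub_le_eigenvalues {ρ : Matrix m m ℂ} (hρ : ρ.PosSemidef) (i : m) :
    -specNorm (L - ρ) ≤ hL.eigenvalues i := by
  have h := abs_le.mp (hL.abs_eigenvalues_sub_le_specNorm ρ i)
  linarith [(hρ.conjStarAlgAut (star hL.eigenvectorUnitary)).re_diag_nonneg i]

lemma exists_waterFill_threshold (hLtr : L.trace = 1) {ρ : Matrix m m ℂ} (hρ : IsDensity ρ) :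
    ∃ θ ∈ Set.Icc 0 (specNorm (L - ρ)), ∑ i, max (hL.eigenvalues i - θ) 0 = 1 := by
  have hT := hρ.conjStarAlgAut (star hL.eigenvectorUnitary)
  have hsum : ∑ i, hL.eigenvalues i = 1 := by
    simpa [hL.trace_eq_sum_eigenvalues] using congrArg Complex.re hLtr
  refine exists_sum_max_sub_eq _ (specNorm_nonneg _) ?_ ?_
  · calc 1 = ∑ i, hL.eigenvalues i := hsum.symm
      _ ≤ ∑ i, max (hL.eigenvalues i - 0) 0 := by gcongr with i; simp
  · calc ∑ i, max (hL.eigenvalues i - specNorm (L - ρ)) 0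
        ≤ ∑ i, (Unitary.conjStarAlgAut ℂ _ (star hL.eigenvectorUnitary) ρ i i).re := by
          gcongr with i
          refine max_le ?_ (hT.1.re_diag_nonneg i)
          linarith [(abs_le.mp (hL.abs_eigenvalues_sub_le_specNorm ρ i)).2]
      _ = 1 := hT.sum_re_diag

end Matrix.IsHermitian

/-- The projection onto density matrices at most doubles the spectral-norm
error: if `‖L − ρ̄‖ ≤ τ` then `‖ρ̂ − ρ̄‖ ≤ 2τ`. -/
theorem pls_projection_spectral_bound
    {d : ℕ} (L ρbar ρhat : Matrix (Fin d) (Fin d) ℂ)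
    (hL : L.IsHermitian) (hLtr : L.trace = 1)
    (hρbar : IsDensity ρbar)
    (hρhatDens : IsDensity ρhat)
    (hρhatMin : ∀ σ : Matrix (Fin d) (Fin d) ℂ, IsDensity σ →
      frobNorm (L - ρhat) ≤ frobNorm (L - σ))
    (τ : ℝ) (hτ : specNorm (L - ρbar) ≤ τ) :
    specNorm (ρhat - ρbar) ≤ 2 * τ := by
  obtain ⟨θ, ⟨hθ0, hθ⟩, hθsum⟩ := hL.exists_waterFill_threshold hLtr hρbar
  have hρhat : ρhat = hL.waterFill θ :=
    eq_of_frobNorm_sub_le_of_frobInner_nonpos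
      (hL.frobInner_sub_waterFill_sub_nonpos hθsum hρhatDens)
      (hρhatMin _ (hL.isDensity_waterFill hθsum))
  have hLρhat : specNorm (L - ρhat) ≤ specNorm (L - ρbar) := by
    rw [hρhat]
    exact hL.specNorm_sub_waterFill_le (abs_le.mpr ⟨by linarith, hθ⟩)
      (hL.neg_specNorm_sub_le_eigenvalues hρbar.1)
  calc specNorm (ρhat - ρbar) ≤ specNorm (ρhat - L) + specNorm (L - ρbar) :=
        specNorm_sub_le _ _ _
    _ ≤ 2 * τ := by rw [specNorm_sub_comm]; linarith
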